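/- arXiv:2306.01319 — 2 statements merged into one kernel-verified Lean document; each statement's English description precedes it below -/
import Mathlib

section
/- Let $0<\nu<1<p<q<r$, $A>0$, $B\geq 0$, $D>0$, $E>0$ and define $F(t) = t^{p-r}A + t^{q-r}B - t^{1-\nu-r}D$ on $(0,\infty)$. Suppose $\max_{t>0} F(t) > (r) E$ where $r=\kappa_1+\kappa_2+2$. Then there exist exactly two points $0 < t_1 < t_2$ with $F(t_1) = F(t_2) = rE$, and $F'(t_1) > 0$, $F'(t_2) < 0$. -/
/-!
Up to the positive factor `t ^ (-ν - r)`, the derivative of `F` is a function `G` that is strictly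
decreasing on `[0, ∞)`, positive at `0` and eventually negative. So `F` increases up to the unique
zero `t⋆` of `G` and decreases afterwards. Since `F < 0` near `0` and `F → 0` at infinity, the level
`r E > 0` is crossed exactly once on each side of `t⋆` as soon as `F t⋆ > r E`.
-/

open Set Filter Topology Real

theorem exists_two_level_points_of_deriv_sign {F : ℝ → ℝ} {c ts : ℝ} (hts : 0 < ts)
    (hdiff : ∀ x, 0 < x → DifferentiableAt ℝ F x)
    (hinc : ∀ x ∈ Ioo 0 ts, 0 < deriv F x) (hdec : ∀ x ∈ Ioi ts, deriv F x < 0)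
    (hzero : ∀ᶠ x in 𝓝[>] 0, F x < c) (htop : ∀ᶠ x in atTop, F x < c)
    (hc : ∃ t0, 0 < t0 ∧ c < F t0) :
    ∃ t1 t2 : ℝ, 0 < t1 ∧ t1 < t2 ∧ F t1 = c ∧ F t2 = c ∧
      0 < deriv F t1 ∧ deriv F t2 < 0 ∧
      ∀ t : ℝ, 0 < t → F t = c → t = t1 ∨ t = t2 := by
  have hcont : ContinuousOn F (Ioi 0) := fun x hx => (hdiff x hx).continuousAt.continuousWithinAt
  have hmono : StrictMonoOn F (Ioc 0 ts) :=
    strictMonoOn_of_deriv_pos (convex_Ioc 0 ts) (hcont.mono Ioc_subset_Ioi_self)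
      (by simpa only [interior_Ioc] using hinc)
  have hanti : StrictAntiOn F (Ici ts) :=
    strictAntiOn_of_deriv_neg (convex_Ici ts) (hcont.mono fun x hx => hts.trans_le hx)
      (by simpa only [interior_Ici] using hdec)
  have hmax : c < F ts := by
    obtain ⟨t0, ht0, hct0⟩ := hc
    rcases le_total t0 ts with h | h
    · exact hct0.trans_le (hmono.monotoneOn ⟨ht0, h⟩ ⟨hts, le_rfl⟩ h)
    · exact hct0.trans_le (hanti.antitoneOn (mem_Ici.2 le_rfl) h h)
  obtain ⟨a, hac, ha0, hats⟩ := (hzero.and (Ioo_mem_nhdsGT hts)).exists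
  obtain ⟨b, hbts, hbc⟩ := ((eventually_gt_atTop ts).and htop).exists
  obtain ⟨t1, ⟨hat1, ht1ts⟩, ht1⟩ :=
    intermediate_value_Ioo hats.le (hcont.mono fun x hx => ha0.trans_le hx.1) ⟨hac, hmax⟩
  obtain ⟨t2, ⟨htst2, -⟩, ht2⟩ :=
    intermediate_value_Ioo' hbts.le (hcont.mono fun x hx => hts.trans_le hx.1) ⟨hbc, hmax⟩
  have ht10 : 0 < t1 := ha0.trans hat1
  refine ⟨t1, t2, ht10, ht1ts.trans htst2, ht1, ht2, hinc t1 ⟨ht10, ht1ts⟩, hdec t2 htst2, ?_⟩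
  intro t ht htc
  rcases le_or_gt t ts with h | h
  · exact .inl (hmono.injOn ⟨ht, h⟩ ⟨ht10, ht1ts.le⟩ (htc.trans ht1.symm))
  · exact .inr (hanti.injOn h.le htst2.le (htc.trans ht2.symm))

theorem exists_pos_sign_change_of_strictAntiOn {G : ℝ → ℝ} (hcont : Continuous G)
    (hanti : StrictAntiOn G (Ici 0)) (h0 : 0 < G 0) (hneg : ∃ b, 0 ≤ b ∧ G b < 0) :
    ∃ ts, 0 < ts ∧ (∀ x ∈ Ico 0 ts, 0 < G x) ∧ ∀ x ∈ Ioi ts, G x < 0 := by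
  obtain ⟨b, hb0, hb⟩ := hneg
  obtain ⟨ts, ⟨hts0, -⟩, hts⟩ := intermediate_value_Ioo' hb0 hcont.continuousOn ⟨hb, h0⟩
  refine ⟨ts, hts0, fun x hx => ?_, fun x hx => ?_⟩
  · simpa only [hts] using hanti hx.1 hts0.le hx.2
  · simpa only [hts] using hanti hts0.le (hts0.trans hx).le hx

noncomputable def profile (ν p q r A B D t : ℝ) : ℝ :=
  t ^ (p - r) * A + t ^ (q - r) * B - t ^ (1 - ν - r) * D

/-- `t ^ (ν + r) F'(t)`. -/
noncomputable def scaledDerivProfile (ν p q r A B D t : ℝ) : ℝ :=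
  (ν + r - 1) * D - (r - p) * A * t ^ (p + ν - 1) - (r - q) * B * t ^ (q + ν - 1)

section Profile

variable {ν p q r A B D : ℝ}

theorem hasDerivAt_profile {x : ℝ} (hx : 0 < x) :
    HasDerivAt (profile ν p q r A B D) (x ^ (-ν - r) * scaledDerivProfile ν p q r A B D x) x := by
  have hpow (s : ℝ) : HasDerivAt (fun t : ℝ => t ^ s) (s * x ^ (s - 1)) x :=
    hasDerivAt_rpow_const (.inl hx.ne')
  refine (((hpow (p - r)).mul_const A).add ((hpow (q - r)).mul_const B)
    |>.sub ((hpow (1 - ν - r)).mul_const D)).congr_deriv ?_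
  have hsplit (s : ℝ) : x ^ (s - r - 1) = x ^ (-ν - r) * x ^ (s + ν - 1) := by
    rw [← rpow_add hx]; ring_nf
  rw [hsplit p, hsplit q, show 1 - ν - r - 1 = -ν - r by ring, scaledDerivProfile]
  ring

theorem profile_eq_rpow_mul {x : ℝ} (hx : 0 < x) :
    profile ν p q r A B D x =
      x ^ (1 - ν - r) * (A * x ^ (p + ν - 1) + B * x ^ (q + ν - 1) - D) := by
  have hsplit (s : ℝ) : x ^ (s - r) = x ^ (1 - ν - r) * x ^ (s + ν - 1) := by
    rw [← rpow_add hx]; ring_nf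
  rw [profile, hsplit p, hsplit q]
  ring

theorem eventually_profile_neg (hp : 0 < p + ν - 1) (hq : 0 < q + ν - 1) (hD : 0 < D) :
    ∀ᶠ x in 𝓝[>] 0, profile ν p q r A B D x < 0 := by
  have hcont : Continuous fun x : ℝ => A * x ^ (p + ν - 1) + B * x ^ (q + ν - 1) - D := by
    have := continuous_rpow_const hp.le
    have := continuous_rpow_const hq.le
    fun_prop
  have hlim := hcont.tendsto 0
  simp only [zero_rpow hp.ne', zero_rpow hq.ne', mul_zero, zero_add, zero_sub] at hlim
  filter_upwards [nhdsWithin_le_nhds (hlim.eventually_lt_const (neg_neg_of_pos hD)),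
    self_mem_nhdsWithin] with x hneg hx
  rw [profile_eq_rpow_mul hx]
  exact mul_neg_of_pos_of_neg (rpow_pos_of_pos hx _) hneg

theorem tendsto_profile_atTop (hp : p < r) (hq : q < r) (hν : 0 < ν + r - 1) :
    Tendsto (profile ν p q r A B D) atTop (𝓝 0) := by
  have hpow {s : ℝ} (hs : s < 0) : Tendsto (fun t : ℝ => t ^ s) atTop (𝓝 0) := by
    simpa only [neg_neg] using tendsto_rpow_neg_atTop (neg_pos.2 hs)
  have := (((hpow (sub_neg.2 hp)).mul_const A).add ((hpow (sub_neg.2 hq)).mul_const B)).sub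
    ((hpow (by linarith : 1 - ν - r < 0)).mul_const D)
  simp only [zero_mul, add_zero, sub_zero] at this
  exact this

theorem continuous_scaledDerivProfile (hp : 0 ≤ p + ν - 1) (hq : 0 ≤ q + ν - 1) :
    Continuous (scaledDerivProfile ν p q r A B D) := by
  have := continuous_rpow_const hp
  have := continuous_rpow_const hq
  unfold scaledDerivProfile
  fun_prop

theorem strictAntiOn_scaledDerivProfile (hp : 0 < p + ν - 1) (hq : 0 < q + ν - 1)
    (hpr : p < r) (hqr : q ≤ r) (hA : 0 < A) (hB : 0 ≤ B) :
    StrictAntiOn (scaledDerivProfile ν p q r A B D) (Ici 0) := by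
  intro s hs t _ hst
  have h1 := mul_lt_mul_of_pos_left (rpow_lt_rpow hs hst hp) (mul_pos (sub_pos.2 hpr) hA)
  have h2 := mul_le_mul_of_nonneg_left (rpow_le_rpow hs hst.le hq.le)
    (mul_nonneg (sub_nonneg.2 hqr) hB)
  simp only [scaledDerivProfile]
  linarith

theorem scaledDerivProfile_zero (hp : 0 < p + ν - 1) (hq : 0 < q + ν - 1) :
    scaledDerivProfile ν p q r A B D 0 = (ν + r - 1) * D := by
  simp [scaledDerivProfile, zero_rpow hp.ne', zero_rpow hq.ne']

theorem exists_scaledDerivProfile_neg (hp : 0 < p + ν - 1) (hpr : p < r) (hqr : q ≤ r)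
    (hA : 0 < A) (hB : 0 ≤ B) : ∃ b, 0 ≤ b ∧ scaledDerivProfile ν p q r A B D b < 0 := by
  have hpA : 0 < (r - p) * A := mul_pos (sub_pos.2 hpr) hA
  obtain ⟨b, hb, hb0⟩ := (((tendsto_rpow_atTop hp).eventually_gt_atTop
    ((ν + r - 1) * D / ((r - p) * A))).and (eventually_ge_atTop 0)).exists
  rw [div_lt_iff₀' hpA] at hb
  have hBb := mul_nonneg (mul_nonneg (sub_nonneg.2 hqr) hB) (rpow_nonneg hb0 (q + ν - 1))
  exact ⟨b, hb0, by simp only [scaledDerivProfile]; linarith⟩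

end Profile

theorem stmt_7_general (ν p q r A B D E : ℝ)
    (hν0 : 0 < ν) (hp : 1 < p) (hpq : p < q) (hqr : q < r)
    (hA : 0 < A) (hB : 0 ≤ B) (hD : 0 < D) (hE : 0 < E)
    (F : ℝ → ℝ)
    (hF : ∀ t : ℝ, F t = t ^ (p - r) * A + t ^ (q - r) * B - t ^ (1 - ν - r) * D)
    (hmax : ∃ t0 : ℝ, 0 < t0 ∧ (∀ t : ℝ, 0 < t → F t ≤ F t0) ∧ r * E < F t0) :
    ∃ t1 t2 : ℝ, 0 < t1 ∧ t1 < t2 ∧ F t1 = r * E ∧ F t2 = r * E ∧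
      0 < deriv F t1 ∧ deriv F t2 < 0 ∧
      ∀ t : ℝ, 0 < t → F t = r * E → t = t1 ∨ t = t2 := by
  obtain ⟨t0, ht0, -, ht0E⟩ := hmax
  obtain rfl : F = profile ν p q r A B D := funext hF
  have he1 : 0 < p + ν - 1 := by linarith
  have he2 : 0 < q + ν - 1 := by linarith
  have hν : 0 < ν + r - 1 := by linarith
  have hpr : p < r := hpq.trans hqr
  obtain ⟨ts, hts, hGpos, hGneg⟩ := exists_pos_sign_change_of_strictAntiOn
    (G := scaledDerivProfile ν p q r A B D) (continuous_scaledDerivProfile he1.le he2.le)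
    (strictAntiOn_scaledDerivProfile he1 he2 hpr hqr.le hA hB)
    (by rw [scaledDerivProfile_zero he1 he2]; positivity)
    (exists_scaledDerivProfile_neg he1 hpr hqr.le hA hB)
  have hrE : 0 < r * E := mul_pos (by linarith) hE
  refine exists_two_level_points_of_deriv_sign hts
    (fun x hx => (hasDerivAt_profile hx).differentiableAt) (fun x hx => ?_) (fun x hx => ?_)
    ((eventually_profile_neg he1 he2 hD).mono fun x hx => hx.trans hrE)
    ((tendsto_profile_atTop hpr hqr hν).eventually_lt_const hrE) ⟨t0, ht0, ht0E⟩
  · rw [(hasDerivAt_profile hx.1).deriv]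
    exact mul_pos (rpow_pos_of_pos hx.1 _) (hGpos x ⟨hx.1.le, hx.2⟩)
  · rw [(hasDerivAt_profile (hts.trans hx)).deriv]
    exact mul_neg_of_pos_of_neg (rpow_pos_of_pos (hts.trans hx) _) (hGneg x hx)

theorem stmt_7 (ν p q r A B D E : ℝ)
    (hν0 : 0 < ν) (hν1 : ν < 1) (hp : 1 < p) (hpq : p < q) (hqr : q < r)
    (hA : 0 < A) (hB : 0 ≤ B) (hD : 0 < D) (hE : 0 < E)
    (F : ℝ → ℝ)
    (hF : ∀ t : ℝ, F t = t ^ (p - r) * A + t ^ (q - r) * B - t ^ (1 - ν - r) * D)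
    (hmax : ∃ t0 : ℝ, 0 < t0 ∧ (∀ t : ℝ, 0 < t → F t ≤ F t0) ∧ r * E < F t0) :
    ∃ t1 t2 : ℝ, 0 < t1 ∧ t1 < t2 ∧ F t1 = r * E ∧ F t2 = r * E ∧
      0 < deriv F t1 ∧ deriv F t2 < 0 ∧
      ∀ t : ℝ, 0 < t → F t = r * E → t = t1 ∨ t = t2 :=
  stmt_7_general ν p q r A B D E hν0 hp hpq hqr hA hB hD hE F hF hmax
end

section
/- Let $0<\nu<1<p<q<r$ and $A,B \geq 0$, $D \geq 0$, $E \geq 0$ satisfy the Nehari constraint $A + B - D - rE = 0$ and the $\mathcal{N}^+$ condition $(p-1)A + (q-1)B + \nu D - r(r-1)E > 0$, where $r=\kappa_1+\kappa_2+2$. Then the energy value $J = \frac{A}{p} + \frac{B}{q} - \frac{D}{1-\nu} - E$ satisfies $J \leq \frac{p-1+\nu}{1-\nu}\left(\frac{1}{r}-\frac{1}{p}\right)A + \frac{q-1+\nu}{1-\nu}\left(\frac{1}{r}-\frac{1}{q}\right)B$; in particular $J < 0$ whenever $A > 0$ or $B > 0$. -/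
theorem stmt_9 (ν p q r A B D E : ℝ)
    (hν0 : 0 < ν) (hν1 : ν < 1) (hp : 1 < p) (hpq : p < q) (hqr : q < r)
    (hA : 0 ≤ A) (hB : 0 ≤ B) (hD : 0 ≤ D) (hE : 0 ≤ E)
    (hN : A + B - D - r * E = 0)
    (hplus : 0 < (p - 1) * A + (q - 1) * B + ν * D - r * (r - 1) * E) :
    A / p + B / q - D / (1 - ν) - E ≤
        (p - 1 + ν) / (1 - ν) * (1 / r - 1 / p) * A +
          (q - 1 + ν) / (1 - ν) * (1 / r - 1 / q) * B ∧
      ((0 < A ∨ 0 < B) → A / p + B / q - D / (1 - ν) - E < 0) := by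
  have hp0 : (0:ℝ) < p := by linarith
  have hq0 : (0:ℝ) < q := by linarith
  have hr0 : (0:ℝ) < r := by linarith
  have h1ν : (0:ℝ) < 1 - ν := by linarith
  have hDval : D = A + B - r * E := by linarith
  have key : 0 < (p - 1 + ν) * A + (q - 1 + ν) * B - r * (r - 1 + ν) * E := by
    have := hplus
    rw [hDval] at this
    nlinarith [this]
  have heq : (p - 1 + ν) / (1 - ν) * (1 / r - 1 / p) * A +
          (q - 1 + ν) / (1 - ν) * (1 / r - 1 / q) * B -
        (A / p + B / q - D / (1 - ν) - E) =
      ((p - 1 + ν) * A + (q - 1 + ν) * B - r * (r - 1 + ν) * E) / (r * (1 - ν)) := by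
    rw [hDval]; field_simp; ring
  have hmain : A / p + B / q - D / (1 - ν) - E ≤
      (p - 1 + ν) / (1 - ν) * (1 / r - 1 / p) * A +
        (q - 1 + ν) / (1 - ν) * (1 / r - 1 / q) * B := by
    have hpos : 0 < ((p - 1 + ν) * A + (q - 1 + ν) * B - r * (r - 1 + ν) * E) /
        (r * (1 - ν)) := div_pos key (by positivity)
    linarith [heq ▸ hpos]
  refine ⟨hmain, fun h => ?_⟩
  have hc1 : (p - 1 + ν) / (1 - ν) * (1 / r - 1 / p) < 0 := by
    apply mul_neg_of_pos_of_neg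
    · exact div_pos (by linarith) h1ν
    · have : 1 / r < 1 / p := one_div_lt_one_div_of_lt hp0 (by linarith)
      linarith
  have hc2 : (q - 1 + ν) / (1 - ν) * (1 / r - 1 / q) < 0 := by
    apply mul_neg_of_pos_of_neg
    · exact div_pos (by linarith) h1ν
    · have : 1 / r < 1 / q := one_div_lt_one_div_of_lt hq0 hqr
      linarith
  have hrhs : (p - 1 + ν) / (1 - ν) * (1 / r - 1 / p) * A +
      (q - 1 + ν) / (1 - ν) * (1 / r - 1 / q) * B < 0 := by
    rcases h with hA' | hB'
    · nlinarith [mul_nonpos_of_nonpos_of_nonneg hc2.le hB]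
    · nlinarith [mul_nonpos_of_nonpos_of_nonneg hc1.le hA]
  linarith
end
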